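/- arXiv:1307.4781 — 2 statements merged into one kernel-verified Lean document; each statement's English description precedes it below -/
import Mathlib

section
/- There exists a constant C > 0 such that for all real ξ with |ξ| ≥ 1 and fixed τ > 0, |∫_0^τ θ^{1/2} e^{Ξ²(θ-τ)} dθ − √τ/Ξ²| ≤ C ξ^{-4}, where Ξ = σ₀ ξ / √2 for fixed σ₀ > 0. -/
/-!
For `a > 0` the weight `exp (a * (θ - τ))` concentrates at the endpoint `θ = τ`, where it has
mass `(1 - exp (-(a * τ))) / a`. Since `√` is `(√τ)⁻¹`-Lipschitz on `[0, τ]` towards `τ`, replacing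
`√θ` by `√τ` costs at most `(√τ)⁻¹ ∫ (τ - θ) exp (a * (θ - τ)) ≤ (√τ)⁻¹ / a²`, and the boundary
term `√τ exp (-(a * τ)) / a` is of the same order because `exp (-x) ≤ x⁻¹`. With `a = Ξ²` this
gives the bound `8 / (√τ σ₀⁴ ξ⁴)`.
-/

open MeasureTheory Real

lemma integral_exp_mul_sub {a : ℝ} (ha : a ≠ 0) (τ : ℝ) :
    ∫ θ in (0 : ℝ)..τ, exp (a * (θ - τ)) = (1 - exp (-(a * τ))) / a := by
  simp_rw [mul_sub]
  rw [intervalIntegral.integral_comp_mul_sub (fun x => exp x) ha, integral_exp]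
  simp only [mul_zero, zero_sub, sub_self, exp_zero, smul_eq_mul]
  field_simp

lemma integral_sub_mul_exp_mul_sub_le {a : ℝ} (ha : 0 < a) {τ : ℝ} (hτ : 0 ≤ τ) :
    ∫ θ in (0 : ℝ)..τ, (τ - θ) * exp (a * (θ - τ)) ≤ 1 / a ^ 2 := by
  have hF : ∀ θ ∈ Set.uIcc 0 τ, HasDerivAt
      (fun x => exp (a * (x - τ)) * ((τ - x) / a + 1 / a ^ 2)) ((τ - θ) * exp (a * (θ - τ))) θ := by
    intro θ _
    have hlin : HasDerivAt (fun x => a * (x - τ)) a θ := by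
      simpa using ((hasDerivAt_id θ).sub_const τ).const_mul a
    have hpoly : HasDerivAt (fun x : ℝ => (τ - x) / a + 1 / a ^ 2) (-1 / a) θ := by
      simpa using (((hasDerivAt_id θ).const_sub τ).div_const a).add_const (1 / a ^ 2)
    refine (hlin.exp.mul hpoly).congr_deriv ?_
    field_simp
    ring
  rw [intervalIntegral.integral_eq_sub_of_hasDerivAt hF
    ((by fun_prop : Continuous fun θ => (τ - θ) * exp (a * (θ - τ))).intervalIntegrable 0 τ)]
  have hFτ : exp (a * (τ - τ)) * ((τ - τ) / a + 1 / a ^ 2) = 1 / a ^ 2 := by simp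
  have hF0 : 0 ≤ exp (a * (0 - τ)) * ((τ - 0) / a + 1 / a ^ 2) := by rw [sub_zero]; positivity
  linarith

lemma abs_integral_mul_exp_sub_le {f : ℝ → ℝ} {a τ L : ℝ} (ha : 0 < a) (hτ : 0 ≤ τ) (hL : 0 ≤ L)
    (hf : IntervalIntegrable f volume 0 τ)
    (hf_lip : ∀ θ ∈ Set.Icc 0 τ, |f θ - f τ| ≤ L * (τ - θ)) :
    |(∫ θ in (0 : ℝ)..τ, f θ * exp (a * (θ - τ))) - f τ * (1 - exp (-(a * τ))) / a|
      ≤ L / a ^ 2 := by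
  have hexp : Continuous fun θ => exp (a * (θ - τ)) := by fun_prop
  have hcentre : (∫ θ in (0 : ℝ)..τ, f θ * exp (a * (θ - τ))) - f τ * (1 - exp (-(a * τ))) / a
      = ∫ θ in (0 : ℝ)..τ, (f θ - f τ) * exp (a * (θ - τ)) := by
    simp_rw [sub_mul]
    rw [intervalIntegral.integral_sub (hf.mul_continuousOn hexp.continuousOn)
      ((hexp.const_mul _).intervalIntegrable 0 τ), intervalIntegral.integral_const_mul,
      integral_exp_mul_sub ha.ne', mul_div_assoc]
  rw [hcentre]
  calc |∫ θ in (0 : ℝ)..τ, (f θ - f τ) * exp (a * (θ - τ))|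
      ≤ ∫ θ in (0 : ℝ)..τ, L * ((τ - θ) * exp (a * (θ - τ))) := by
        rw [← Real.norm_eq_abs]
        refine intervalIntegral.norm_integral_le_of_norm_le hτ (ae_of_all _ fun θ hθ => ?_)
          ((by fun_prop : Continuous fun θ => L * ((τ - θ) * exp (a * (θ - τ))))
            |>.intervalIntegrable 0 τ)
        rw [Real.norm_eq_abs, abs_mul, abs_of_pos (exp_pos _), ← mul_assoc]
        exact mul_le_mul_of_nonneg_right (hf_lip θ (Set.Ioc_subset_Icc_self hθ)) (exp_pos _).le
    _ = L * ∫ θ in (0 : ℝ)..τ, (τ - θ) * exp (a * (θ - τ)) :=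
        intervalIntegral.integral_const_mul _ _
    _ ≤ L * (1 / a ^ 2) := by gcongr; exact integral_sub_mul_exp_mul_sub_le ha hτ
    _ = L / a ^ 2 := by ring

lemma abs_sqrt_sub_sqrt_le {θ τ : ℝ} (hθ : 0 ≤ θ) (hθτ : θ ≤ τ) (hτ : 0 < τ) :
    |√θ - √τ| ≤ (√τ)⁻¹ * (τ - θ) := by
  have hsτ : 0 < √τ := sqrt_pos.mpr hτ
  rw [abs_sub_comm, abs_of_nonneg (sub_nonneg.mpr (sqrt_le_sqrt hθτ)), inv_mul_eq_div,
    le_div_iff₀ hsτ]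
  nlinarith [sq_sqrt hθ, sq_sqrt hτ.le, sqrt_nonneg θ]

lemma exp_neg_le_inv {x : ℝ} (hx : 0 < x) : exp (-x) ≤ x⁻¹ := by
  rw [exp_neg]
  exact inv_anti₀ hx (by linarith [add_one_le_exp x])

lemma abs_integral_sqrt_mul_exp_sub_le {a τ : ℝ} (ha : 0 < a) (hτ : 0 < τ) :
    |(∫ θ in (0 : ℝ)..τ, √θ * exp (a * (θ - τ))) - √τ / a| ≤ 2 / (√τ * a ^ 2) := by
  have hsτ : 0 < √τ := sqrt_pos.mpr hτ
  have hmain := abs_integral_mul_exp_sub_le ha hτ.le (inv_nonneg.mpr hsτ.le)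
    (continuous_sqrt.intervalIntegrable 0 τ) fun θ hθ => abs_sqrt_sub_sqrt_le hθ.1 hθ.2 hτ
  have htail : √τ * exp (-(a * τ)) / a ≤ (√τ)⁻¹ / a ^ 2 :=
    calc √τ * exp (-(a * τ)) / a ≤ √τ * (a * τ)⁻¹ / a := by
          gcongr; exact exp_neg_le_inv (by positivity)
      _ = (√τ)⁻¹ / a ^ 2 := by
          field_simp
          rw [sq_sqrt hτ.le]
  calc |(∫ θ in (0 : ℝ)..τ, √θ * exp (a * (θ - τ))) - √τ / a|
      = |((∫ θ in (0 : ℝ)..τ, √θ * exp (a * (θ - τ))) - √τ * (1 - exp (-(a * τ))) / a)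
          - √τ * exp (-(a * τ)) / a| := by congr 1; ring
    _ ≤ (√τ)⁻¹ / a ^ 2 + (√τ)⁻¹ / a ^ 2 := by
        refine (abs_sub _ _).trans (add_le_add hmain ?_)
        rwa [abs_of_nonneg (by positivity)]
    _ = 2 / (√τ * a ^ 2) := by field_simp; ring

theorem integral_sqrt_asymptotic (σ₀ τ : ℝ) (hσ₀ : 0 < σ₀) (hτ : 0 < τ) :
    ∃ C > (0 : ℝ), ∀ ξ : ℝ, 1 ≤ |ξ| →
      |(∫ θ in (0 : ℝ)..τ, Real.sqrt θ * Real.exp ((σ₀ * ξ / Real.sqrt 2) ^ 2 * (θ - τ))) -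
          Real.sqrt τ / (σ₀ * ξ / Real.sqrt 2) ^ 2| ≤ C / ξ ^ 4 := by
  refine ⟨8 / (√τ * σ₀ ^ 4), by positivity, fun ξ hξ => ?_⟩
  have hξ0 : ξ ≠ 0 := by rintro rfl; norm_num at hξ
  have hΞ : (σ₀ * ξ / √2) ^ 2 = σ₀ ^ 2 * ξ ^ 2 / 2 := by
    rw [div_pow, sq_sqrt zero_le_two]; ring
  calc _ ≤ 2 / (√τ * ((σ₀ * ξ / √2) ^ 2) ^ 2) :=
        abs_integral_sqrt_mul_exp_sub_le (by positivity) hτ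
    _ = 8 / (√τ * σ₀ ^ 4) / ξ ^ 4 := by rw [hΞ]; field_simp; ring
end

section
/- For 0 < τ₁ < τ₂, σ₀ > 0, S > 0, the determinant d(ξ) defined as in the linearized system satisfies d(ξ) = S·(√(τ₁τ₂)/Ξ²)·(∫_0^1 ρ^{-1/2} e^{Ξ²τ₁(ρ-1)} dρ − ∫_0^1 ρ^{-1/2} e^{Ξ²τ₂(ρ-1)} dρ) for every ξ ≠ 0, where Ξ = σ₀ξ/√2. -/
/-!
Put `A(τ) = ∫₀^τ θ^{-1/2} e^{c(θ-τ)} dθ` and `B(τ) = ∫₀^τ θ^{1/2} e^{c(θ-τ)} dθ`, with `c = Ξ²`.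
Integrating `B` by parts against `(√θ)' = 1/(2√θ)` gives `c·B(τ) = √τ - A(τ)/2`, so in
`A(τ₁)B(τ₂) - B(τ₁)A(τ₂)` the products `A(τ₁)A(τ₂)` cancel and `c` times the determinant is
`√τ₂·A(τ₁) - √τ₁·A(τ₂)`. The substitution `θ = τρ` turns `A(τ)` into
`√τ·∫₀¹ ρ^{-1/2} e^{cτ(ρ-1)} dρ`.
-/

open MeasureTheory Real intervalIntegral Set

theorem intervalIntegrable_inv_sqrt {τ : ℝ} (hτ : 0 ≤ τ) :
    IntervalIntegrable (fun θ => (√θ)⁻¹) volume 0 τ := by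
  refine (intervalIntegrable_rpow' (r := -(1 / 2)) (by norm_num)).congr_uIoo fun θ hθ => ?_
  rw [uIoo_of_le hτ] at hθ
  simp only [rpow_neg hθ.1.le, sqrt_eq_rpow]

theorem mul_integral_sqrt_mul_exp (c : ℝ) {τ : ℝ} (hτ : 0 < τ) :
    c * ∫ θ in (0 : ℝ)..τ, √θ * exp (c * (θ - τ)) =
      √τ - (1 / 2) * ∫ θ in (0 : ℝ)..τ, exp (c * (θ - τ)) / √θ := by
  have hv : ∀ θ, HasDerivAt (fun θ => exp (c * (θ - τ))) (exp (c * (θ - τ)) * c) θ :=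
    fun θ => by simpa using ((hasDerivAt_id θ).sub_const τ).const_mul c |>.exp
  have hibp := integral_mul_deriv_eq_deriv_mul_of_hasDeriv_right (a := 0) (b := τ)
    continuous_sqrt.continuousOn (by fun_prop)
    (fun θ hθ => by
      rw [min_eq_left hτ.le] at hθ
      exact (hasDerivAt_sqrt hθ.1.ne').hasDerivWithinAt)
    (fun θ _ => (hv θ).hasDerivWithinAt)
    (by simpa only [one_div, mul_inv] using (intervalIntegrable_inv_sqrt hτ.le).const_mul 2⁻¹)
    ((by fun_prop : Continuous fun θ => exp (c * (θ - τ)) * c).intervalIntegrable _ _)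
  simp only [sqrt_zero, zero_mul, sub_zero, sub_self, mul_zero, exp_zero, mul_one] at hibp
  calc c * ∫ θ in (0 : ℝ)..τ, √θ * exp (c * (θ - τ))
      = ∫ θ in (0 : ℝ)..τ, √θ * (exp (c * (θ - τ)) * c) := by
        rw [← intervalIntegral.integral_const_mul]; congr with θ; ring
    _ = √τ - ∫ θ in (0 : ℝ)..τ, 1 / (2 * √θ) * exp (c * (θ - τ)) := hibp
    _ = √τ - (1 / 2) * ∫ θ in (0 : ℝ)..τ, exp (c * (θ - τ)) / √θ := by
        rw [← intervalIntegral.integral_const_mul]; congr with θ; ring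

theorem integral_exp_mul_div_sqrt_eq (c : ℝ) {τ : ℝ} (hτ : 0 < τ) :
    ∫ θ in (0 : ℝ)..τ, exp (c * (θ - τ)) / √θ =
      √τ * ∫ ρ in (0 : ℝ)..1, exp (c * τ * (ρ - 1)) / √ρ := by
  have hsubst := smul_integral_comp_mul_left (a := 0) (b := 1)
    (fun θ => exp (c * (θ - τ)) / √θ) τ
  rw [smul_eq_mul, mul_zero, mul_one] at hsubst
  rw [← hsubst, ← intervalIntegral.integral_const_mul, ← intervalIntegral.integral_const_mul]
  refine integral_congr fun ρ _ => ?_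
  have hsqrt : √τ ≠ 0 := (sqrt_pos.2 hτ).ne'
  rw [sqrt_mul hτ.le, show c * (τ * ρ - τ) = c * τ * (ρ - 1) by ring]
  nth_rw 1 [← mul_self_sqrt hτ.le]
  field_simp

theorem determinant_formula_general (τ₁ τ₂ σ₀ S : ℝ) (hτ₁ : 0 < τ₁) (hτ : τ₁ < τ₂)
    (hσ₀ : 0 < σ₀) (ξ : ℝ) (hξ : ξ ≠ 0) :
    S * ((∫ θ in (0 : ℝ)..τ₁, Real.exp ((σ₀ * ξ / Real.sqrt 2) ^ 2 * (θ - τ₁)) / Real.sqrt θ) *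
          (∫ θ in (0 : ℝ)..τ₂, Real.sqrt θ * Real.exp ((σ₀ * ξ / Real.sqrt 2) ^ 2 * (θ - τ₂))) -
        (∫ θ in (0 : ℝ)..τ₁, Real.sqrt θ * Real.exp ((σ₀ * ξ / Real.sqrt 2) ^ 2 * (θ - τ₁))) *
          (∫ θ in (0 : ℝ)..τ₂, Real.exp ((σ₀ * ξ / Real.sqrt 2) ^ 2 * (θ - τ₂)) / Real.sqrt θ)) =
      S * (Real.sqrt (τ₁ * τ₂) / (σ₀ * ξ / Real.sqrt 2) ^ 2) *
        ((∫ ρ in (0 : ℝ)..1, Real.exp ((σ₀ * ξ / Real.sqrt 2) ^ 2 * τ₁ * (ρ - 1)) / Real.sqrt ρ) -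
          ∫ ρ in (0 : ℝ)..1, Real.exp ((σ₀ * ξ / Real.sqrt 2) ^ 2 * τ₂ * (ρ - 1)) / Real.sqrt ρ) := by
  have hc : (σ₀ * ξ / √2) ^ 2 ≠ 0 := by positivity
  generalize (σ₀ * ξ / √2) ^ 2 = c at hc ⊢
  have hτ₂ : 0 < τ₂ := hτ₁.trans hτ
  have hB₁ := mul_integral_sqrt_mul_exp c hτ₁
  have hB₂ := mul_integral_sqrt_mul_exp c hτ₂
  rw [integral_exp_mul_div_sqrt_eq c hτ₁] at hB₁ ⊢
  rw [integral_exp_mul_div_sqrt_eq c hτ₂] at hB₂ ⊢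
  set I₁ := ∫ ρ in (0 : ℝ)..1, exp (c * τ₁ * (ρ - 1)) / √ρ
  set I₂ := ∫ ρ in (0 : ℝ)..1, exp (c * τ₂ * (ρ - 1)) / √ρ
  rw [sqrt_mul hτ₁.le]
  field_simp
  linear_combination (S * √τ₁ * I₁) * hB₂ - (S * √τ₂ * I₂) * hB₁

theorem determinant_formula (τ₁ τ₂ σ₀ S : ℝ) (hτ₁ : 0 < τ₁) (hτ : τ₁ < τ₂)
    (hσ₀ : 0 < σ₀) (hS : 0 < S) (ξ : ℝ) (hξ : ξ ≠ 0) :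
    S * ((∫ θ in (0 : ℝ)..τ₁, Real.exp ((σ₀ * ξ / Real.sqrt 2) ^ 2 * (θ - τ₁)) / Real.sqrt θ) *
          (∫ θ in (0 : ℝ)..τ₂, Real.sqrt θ * Real.exp ((σ₀ * ξ / Real.sqrt 2) ^ 2 * (θ - τ₂))) -
        (∫ θ in (0 : ℝ)..τ₁, Real.sqrt θ * Real.exp ((σ₀ * ξ / Real.sqrt 2) ^ 2 * (θ - τ₁))) *
          (∫ θ in (0 : ℝ)..τ₂, Real.exp ((σ₀ * ξ / Real.sqrt 2) ^ 2 * (θ - τ₂)) / Real.sqrt θ)) =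
      S * (Real.sqrt (τ₁ * τ₂) / (σ₀ * ξ / Real.sqrt 2) ^ 2) *
        ((∫ ρ in (0 : ℝ)..1, Real.exp ((σ₀ * ξ / Real.sqrt 2) ^ 2 * τ₁ * (ρ - 1)) / Real.sqrt ρ) -
          ∫ ρ in (0 : ℝ)..1, Real.exp ((σ₀ * ξ / Real.sqrt 2) ^ 2 * τ₂ * (ρ - 1)) / Real.sqrt ρ) :=
  determinant_formula_general τ₁ τ₂ σ₀ S hτ₁ hτ hσ₀ ξ hξ
end
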